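/- In the Hopf algebra H₁ (the n=1 case of Hₙ) with generators X, Y, δ₁ satisfying [Y,X] = X, [Y, δ₁] = δ₁, [X, δ₁] = δ₂ (setting δ₂ = [X,δ₁]), coproducts Δ(Y) = Y⊗1+1⊗Y, Δ(X) = X⊗1+1⊗X+δ₁⊗Y, Δ(δ₁) = δ₁⊗1+1⊗δ₁, and antipode S(Y) = −Y, S(X) = −X+δ₁Y, S(δ₁) = −δ₁, the twisted antipode S_δ with δ(Y)=1, δ(X)=δ(δ₁)=0 satisfies S_δ(Y) = −Y+1, S_δ(X) = −X+δ₁Y, S_δ(δ₁) = −δ₁, and S_δ² = id on the generators. -/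

import Mathlib

open TensorProduct

/-- The `δ`-twisted antipode `S_δ(h) = Σ δ(h₍₁₎) S(h₍₂₎)`. -/
noncomputable def twistedAntipode {k H : Type*} [Field k] [Ring H] [HopfAlgebra k H]
    (δ : H →ₐ[k] k) : H →ₗ[k] H :=
  (TensorProduct.lid k H).toLinearMap ∘ₗ
    TensorProduct.map δ.toLinearMap (HopfAlgebra.antipode (R := k)) ∘ₗ Coalgebra.comul

/-! Since `δ` is a character and `S` is an antihomomorphism, `S_δ` is an antihomomorphism too.
On the generators `S_δ` is read off from the coproducts; then
`S_δ² X = X - δ₁ Y + S_δ(δ₁ Y)`, and `S_δ(δ₁ Y) = S_δ(Y) S_δ(δ₁) = (1 - Y)(-δ₁) = δ₁ Y`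
because `[Y, δ₁] = δ₁`. -/

open Coalgebra HopfAlgebra

section TwistedAntipode

variable {k H : Type*} [Field k] [Ring H] [HopfAlgebra k H] (δ : H →ₐ[k] k)

lemma twistedAntipode_eq_sum {a : H} {ι : Type*} (𝓡 : Repr k a ι) :
    twistedAntipode δ a = ∑ i ∈ 𝓡.index, δ (𝓡.left i) • antipode k (𝓡.right i) := by
  simp [twistedAntipode, ← 𝓡.eq]

lemma twistedAntipode_mul (a b : H) :
    twistedAntipode δ (a * b) = twistedAntipode δ b * twistedAntipode δ a := by
  rw [twistedAntipode_eq_sum δ ((ℛ k a).mul (ℛ k b)), twistedAntipode_eq_sum δ (ℛ k a),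
    twistedAntipode_eq_sum δ (ℛ k b), Finset.sum_mul_sum, Repr.mul_index,
    Finset.sum_product, Finset.sum_comm]
  simp [antipode_mul_antidistrib, mul_smul]

lemma twistedAntipode_one : twistedAntipode δ (1 : H) = 1 := by
  simp [twistedAntipode, Algebra.TensorProduct.one_def]

end TwistedAntipode

theorem H1_twistedAntipode_involutive_general {k H : Type*} [Field k] [Ring H]
    [HopfAlgebra k H] (X Y d1 : H)
    (hYd : Y * d1 - d1 * Y = d1)
    (hΔY : Coalgebra.comul (R := k) Y = Y ⊗ₜ[k] 1 + 1 ⊗ₜ[k] Y)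
    (hΔX : Coalgebra.comul (R := k) X = X ⊗ₜ[k] 1 + 1 ⊗ₜ[k] X + d1 ⊗ₜ[k] Y)
    (hΔd : Coalgebra.comul (R := k) d1 = d1 ⊗ₜ[k] 1 + 1 ⊗ₜ[k] d1)
    (hSY : HopfAlgebra.antipode (R := k) Y = -Y)
    (hSX : HopfAlgebra.antipode (R := k) X = -X + d1 * Y)
    (hSd : HopfAlgebra.antipode (R := k) d1 = -d1)
    (δ : H →ₐ[k] k) (hδY : δ Y = 1) (hδX : δ X = 0) (hδd : δ d1 = 0) :
    twistedAntipode δ Y = -Y + 1 ∧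
      twistedAntipode δ X = -X + d1 * Y ∧
      twistedAntipode δ d1 = -d1 ∧
      twistedAntipode δ (twistedAntipode δ Y) = Y ∧
      twistedAntipode δ (twistedAntipode δ X) = X ∧
      twistedAntipode δ (twistedAntipode δ d1) = d1 := by
  have hY : twistedAntipode δ Y = -Y + 1 := by
    simp [twistedAntipode, hΔY, hSY, hδY, add_comm]
  have hX : twistedAntipode δ X = -X + d1 * Y := by
    simp [twistedAntipode, hΔX, hSX, hδX, hδd]
  have hd : twistedAntipode δ d1 = -d1 := by
    simp [twistedAntipode, hΔd, hSd, hδd]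
  have hdY : twistedAntipode δ (d1 * Y) = d1 * Y := by
    rw [twistedAntipode_mul, hY, hd]
    linear_combination (norm := noncomm_ring) hYd
  refine ⟨hY, hX, hd, ?_, ?_, ?_⟩
  · rw [hY, map_add, map_neg, hY, twistedAntipode_one]; abel
  · rw [hX, map_add, map_neg, hX, hdY]; abel
  · rw [hd, map_neg, hd, neg_neg]

/-- In the Hopf algebra `H₁` with generators `X, Y, δ₁` satisfying
`[Y,X] = X`, `[Y,δ₁] = δ₁`, `[X,δ₁] = δ₂` (with `δ₂ := [X,δ₁]` commuting with `δ₁`),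
coproducts `Δ(Y) = Y⊗1+1⊗Y`, `Δ(X) = X⊗1+1⊗X+δ₁⊗Y`, `Δ(δ₁) = δ₁⊗1+1⊗δ₁`,
antipode `S(Y) = −Y`, `S(X) = −X+δ₁Y`, `S(δ₁) = −δ₁`, and the character
`δ(Y) = 1`, `δ(X) = δ(δ₁) = 0`, the twisted antipode satisfies
`S_δ(Y) = −Y+1`, `S_δ(X) = −X+δ₁Y`, `S_δ(δ₁) = −δ₁`, and `S_δ² = id` on the
generators. -/
theorem H1_twistedAntipode_involutive {k H : Type*} [Field k] [Ring H]
    [HopfAlgebra k H] (X Y d1 : H)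
    (hYX : Y * X - X * Y = X)
    (hYd : Y * d1 - d1 * Y = d1)
    (hdd : d1 * (X * d1 - d1 * X) = (X * d1 - d1 * X) * d1)
    (hΔY : Coalgebra.comul (R := k) Y = Y ⊗ₜ[k] 1 + 1 ⊗ₜ[k] Y)
    (hΔX : Coalgebra.comul (R := k) X = X ⊗ₜ[k] 1 + 1 ⊗ₜ[k] X + d1 ⊗ₜ[k] Y)
    (hΔd : Coalgebra.comul (R := k) d1 = d1 ⊗ₜ[k] 1 + 1 ⊗ₜ[k] d1)
    (hSY : HopfAlgebra.antipode (R := k) Y = -Y)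
    (hSX : HopfAlgebra.antipode (R := k) X = -X + d1 * Y)
    (hSd : HopfAlgebra.antipode (R := k) d1 = -d1)
    (δ : H →ₐ[k] k) (hδY : δ Y = 1) (hδX : δ X = 0) (hδd : δ d1 = 0) :
    twistedAntipode δ Y = -Y + 1 ∧
      twistedAntipode δ X = -X + d1 * Y ∧
      twistedAntipode δ d1 = -d1 ∧
      twistedAntipode δ (twistedAntipode δ Y) = Y ∧
      twistedAntipode δ (twistedAntipode δ X) = X ∧
      twistedAntipode δ (twistedAntipode δ d1) = d1 :=
  H1_twistedAntipode_involutive_general X Y d1 hYd hΔY hΔX hΔd hSY hSX hSd δ hδY hδX hδd
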